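/- arXiv:2306.01508 — 4 statements merged into one kernel-verified Lean document; each statement's English description precedes it below -/
import Mathlib

section
/- Let g, a, h be real vector spaces with bilinear maps β : g × g → g, τ : g × a → a, λ : g × h → h, ϖ : a × a → h such that β is a Lie bracket, τ and λ are representations of (g,β), ϖ is symmetric and g-equivariant, so that the bracket [(h₁,a₁,u₁),(h₂,a₂,u₂)] := (λ(u₁)h₂ − λ(u₂)h₁ + ϖ(a₁,a₂), τ(u₁)a₂ − τ(u₂)a₁, β(u₁,u₂)) makes h ⊕ a ⊕ g a graded Lie algebra concentrated in degrees −2, −1, 0. Let δ_h : h → a and δ_a : a → g be linear maps with δ_a ∘ δ_h = 0, and define the degree 1 operator δ(h,a,u) := (0, δ_h(h), δ_a(a)). Then δ is a derivation of the bracket, i.e. δ[x,y] = [δx, y] + (−1)^{|x|}[x, δy] for all homogeneous x, y (equivalently, (h ⊕ a ⊕ g, [·,·], δ) is a differential graded Lie algebra), if and only if all of the following hold: (a) δ_h(λ(u)h) = τ(u)(δ_h h) and δ_a(τ(u)a) = β(u, δ_a a) for all u ∈ g, h ∈ h, a ∈ a; (b) δ_h(ϖ(a₁,a₂)) = τ(δ_a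 a₁)(a₂) + τ(δ_a a₂)(a₁) for all a₁, a₂ ∈ a; (c) λ(δ_a a)(h) = ϖ(a, δ_h h) for all a ∈ a, h ∈ h. -/
/-- Homogeneity-with-degree predicate on `H × A × G`, where elements of `G` have
degree `0`, elements of `A` have degree `-1`, and elements of `H` have degree `-2`. -/
def IsDeg {H A G : Type*} [Zero H] [Zero A] [Zero G] (x : H × A × G) (d : ℤ) : Prop :=
  (d = 0 ∧ x.1 = 0 ∧ x.2.1 = 0) ∨
  (d = -1 ∧ x.1 = 0 ∧ x.2.2 = 0) ∨
  (d = -2 ∧ x.2.1 = 0 ∧ x.2.2 = 0)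

theorem stmt1
    {G A H : Type*} [AddCommGroup G] [Module ℝ G] [AddCommGroup A] [Module ℝ A]
    [AddCommGroup H] [Module ℝ H]
    (β : G →ₗ[ℝ] G →ₗ[ℝ] G) (τ : G →ₗ[ℝ] A →ₗ[ℝ] A)
    (lam : G →ₗ[ℝ] H →ₗ[ℝ] H) (ϖ : A →ₗ[ℝ] A →ₗ[ℝ] H)
    -- β is a Lie bracket on G
    (hβ_anti : ∀ u v : G, β u v = -β v u)
    (hβ_jac : ∀ u v w : G, β u (β v w) = β (β u v) w + β v (β u w))
    -- τ and lam are representations of (G, β)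
    (hτ : ∀ (u v : G) (x : A), τ (β u v) x = τ u (τ v x) - τ v (τ u x))
    (hlam : ∀ (u v : G) (w : H), lam (β u v) w = lam u (lam v w) - lam v (lam u w))
    -- ϖ is symmetric and G-equivariant
    (hϖ_symm : ∀ x y : A, ϖ x y = ϖ y x)
    (hϖ_equiv : ∀ (u : G) (x y : A), lam u (ϖ x y) = ϖ (τ u x) y + ϖ x (τ u y))
    -- the graded Lie bracket on H ⊕ A ⊕ G
    (br : (H × A × G) → (H × A × G) → (H × A × G))
    (hbr : ∀ x y : H × A × G,
      br x y = (lam x.2.2 y.1 - lam y.2.2 x.1 + ϖ x.2.1 y.2.1,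
                τ x.2.2 y.2.1 - τ y.2.2 x.2.1,
                β x.2.2 y.2.2))
    -- the degree 1 operator δ
    (δh : H →ₗ[ℝ] A) (δa : A →ₗ[ℝ] G)
    (hδδ : ∀ w : H, δa (δh w) = 0)
    (δ : (H × A × G) → (H × A × G))
    (hδ : ∀ x : H × A × G, δ x = (0, δh x.1, δa x.2.1)) :
    (∀ (x y : H × A × G) (dx dy : ℤ), IsDeg x dx → IsDeg y dy →
        δ (br x y) = br (δ x) y + ((-1 : ℝ) ^ dx) • br x (δ y))
    ↔
    ((∀ (u : G) (w : H), δh (lam u w) = τ u (δh w)) ∧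
     (∀ (u : G) (x : A), δa (τ u x) = β u (δa x)) ∧
     (∀ x y : A, δh (ϖ x y) = τ (δa x) y + τ (δa y) x) ∧
     (∀ (x : A) (w : H), lam (δa x) w = ϖ x (δh w))) := by

  have e0 : ((-1 : ℝ) ^ (0:ℤ)) = 1 := by norm_num
  have e1 : ((-1 : ℝ) ^ (-1:ℤ)) = -1 := by norm_num
  have e2 : ((-1 : ℝ) ^ (-2:ℤ)) = 1 := by norm_num
  constructor
  · intro hD
    refine ⟨?_, ?_, ?_, ?_⟩
    · intro u w
      have h := hD (0, 0, u) (w, 0, 0) 0 (-2)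
        (Or.inl ⟨rfl, rfl, rfl⟩) (Or.inr (Or.inr ⟨rfl, rfl, rfl⟩))
      simp [hbr, hδ, e0, Prod.ext_iff] at h
      simpa using h
    · intro u x
      have h := hD (0, 0, u) (0, x, 0) 0 (-1)
        (Or.inl ⟨rfl, rfl, rfl⟩) (Or.inr (Or.inl ⟨rfl, rfl, rfl⟩))
      simp [hbr, hδ, e0, Prod.ext_iff] at h
      simpa using h
    · intro x y
      have h := hD (0, x, 0) (0, y, 0) (-1) (-1)
        (Or.inr (Or.inl ⟨rfl, rfl, rfl⟩)) (Or.inr (Or.inl ⟨rfl, rfl, rfl⟩))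
      simp [hbr, hδ, e1, Prod.ext_iff] at h
      linear_combination (norm := module) h
    · intro x w
      have h := hD (0, x, 0) (w, 0, 0) (-1) (-2)
        (Or.inr (Or.inl ⟨rfl, rfl, rfl⟩)) (Or.inr (Or.inr ⟨rfl, rfl, rfl⟩))
      simp [hbr, hδ, e1, Prod.ext_iff] at h
      linear_combination (norm := module) -h
  · rintro ⟨c1, c2, c3, c4⟩ ⟨x1, x2, x3⟩ ⟨y1, y2, y3⟩ dx dy hx hy
    rcases hx with ⟨rfl, hx1, hx2⟩ | ⟨rfl, hx1, hx2⟩ | ⟨rfl, hx1, hx2⟩ <;>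
      rcases hy with ⟨rfl, hy1, hy2⟩ | ⟨rfl, hy1, hy2⟩ | ⟨rfl, hy1, hy2⟩ <;>
        simp only at hx1 hx2 hy1 hy2 <;> subst hx1 hx2 hy1 hy2 <;>
          simp [hbr, hδ, e0, e1, e2, Prod.ext_iff, c1, c2, c3, c4, hδδ]
    · rw [hβ_anti y3 (δa x2)]; module
    · rw [hϖ_symm (δh x1) y2]; module
end

section
/- Let (a, ⟦·,·⟧, p) be an exact Courant algebra over a real Lie algebra g. Then: (i) the bracket ⟦x,·⟧ depends only on p x, i.e. if p x = p x' then ⟦x,y⟧ = ⟦x',y⟧ for all y ∈ a; (ii) consequently the formula u·y := ⟦x̂, y⟧, where x̂ is any element of a with p x̂ = u, gives a well-defined bilinear map g × a → a which makes a a g-module, i.e. [u,v]·y = u·(v·y) − v·(u·y) for all u, v ∈ g and y ∈ a; (iii) the kernel of p is a g-submodule of a: if p y = 0 then p(u·y) = 0 for all u ∈ g. -/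
theorem stmt3
    {G A : Type*} [LieRing G] [LieAlgebra ℝ G]
    [AddCommGroup A] [Module ℝ A]
    -- an exact Courant algebra (A, br, p) over G
    (br : A →ₗ[ℝ] A →ₗ[ℝ] A) (p : A →ₗ[ℝ] G)
    (hleib : ∀ x y z : A, br x (br y z) = br (br x y) z + br y (br x z))
    (hp : ∀ x y : A, p (br x y) = ⁅p x, p y⁆)
    (hsurj : Function.Surjective p)
    (hcentral : ∀ h x : A, p h = 0 → br h x = 0) :
    -- (i) the bracket br x · depends only on p x
    (∀ x x' y : A, p x = p x' → br x y = br x' y) ∧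
    -- (ii) the induced action u · y := br x̂ y (p x̂ = u) makes A a G-module
    (∀ (u v : G) (y xu xv xuv : A), p xu = u → p xv = v → p xuv = ⁅u, v⁆ →
        br xuv y = br xu (br xv y) - br xv (br xu y)) ∧
    -- (iii) the kernel of p is a G-submodule of A
    (∀ x y : A, p y = 0 → p (br x y) = 0) := by
  have key : ∀ x x' y : A, p x = p x' → br x y = br x' y := by
    intro x x' y h
    have h0 : p (x - x') = 0 := by simp [h]
    have := hcentral (x - x') y h0
    simp only [map_sub, LinearMap.sub_apply, sub_eq_zero] at this
    exact this
  refine ⟨key, ?_, ?_⟩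
  · intro u v y xu xv xuv hu hv huv
    have h1 : br xuv y = br (br xu xv) y := by
      apply key
      rw [huv, hp, hu, hv]
    rw [h1, eq_sub_iff_add_eq]; exact (hleib xu xv y).symm
  · intro x y hy
    rw [hp, hy]
    simp
end

section
/- Let (a, ⟦·,·⟧, p) be an exact Courant algebra over a real Lie algebra g, and let a carry the g-module structure u·y := ⟦x̂, y⟧ for any x̂ with p x̂ = u (which is well defined since the kernel of p is left-central). Define ϖ(x,y) := ⟦x,y⟧ + ⟦y,x⟧. Then ϖ is a symmetric bilinear map a × a → a whose values lie in the kernel of p, and ϖ is g-equivariant: u·ϖ(x,y) = ϖ(u·x, y) + ϖ(x, u·y) for all u ∈ g and x, y ∈ a. -/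
theorem stmt4
    {G A : Type*} [LieRing G] [LieAlgebra ℝ G]
    [AddCommGroup A] [Module ℝ A]
    -- an exact Courant algebra (A, br, p) over G
    (br : A →ₗ[ℝ] A →ₗ[ℝ] A) (p : A →ₗ[ℝ] G)
    (hleib : ∀ x y z : A, br x (br y z) = br (br x y) z + br y (br x z))
    (hp : ∀ x y : A, p (br x y) = ⁅p x, p y⁆)
    (hsurj : Function.Surjective p)
    (hcentral : ∀ h x : A, p h = 0 → br h x = 0)
    -- the symmetrization ϖ of the bracket
    (ϖ : A → A → A)
    (hϖ : ∀ x y : A, ϖ x y = br x y + br y x) :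
    -- ϖ is a symmetric bilinear map
    (∀ x y : A, ϖ x y = ϖ y x) ∧
    (∀ x₁ x₂ y : A, ϖ (x₁ + x₂) y = ϖ x₁ y + ϖ x₂ y) ∧
    (∀ (c : ℝ) (x y : A), ϖ (c • x) y = c • ϖ x y) ∧
    -- whose values lie in the kernel of p
    (∀ x y : A, p (ϖ x y) = 0) ∧
    -- and which is G-equivariant for the action u · z := br x̂ z (p x̂ = u)
    (∀ (u : G) (xh x y : A), p xh = u →
        br xh (ϖ x y) = ϖ (br xh x) y + ϖ x (br xh y)) := by
  refine ⟨fun x y => by rw [hϖ, hϖ]; abel,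
    fun x₁ x₂ y => by rw [hϖ, hϖ, hϖ, map_add, LinearMap.add_apply, map_add]; abel,
    fun c x y => by rw [hϖ, hϖ, map_smul, LinearMap.smul_apply, map_smul, smul_add],
    fun x y => by rw [hϖ, map_add, hp, hp]; rw [← lie_skew]; abel,
    fun u xh x y _ => by
      rw [hϖ, hϖ, hϖ, map_add, hleib xh x y, hleib xh y x]; abel⟩
end

section
/- Let (R, E, ⟨·,·⟩, ρ, D, ⟦·,·⟧) be a Courant–Dorfman-type algebra with left-central exact part. Let g be a real Lie algebra, let ψ : g → E be an ℝ-linear map that preserves brackets, ⟦ψ(u), ψ(v)⟧ = ψ([u,v]), and has isotropic image, ⟨ψ(u), ψ(v)⟩ = 0 for all u, v ∈ g. Let h be a g-module and ν : h → R an ℝ-linear map that is g-equivariant in the sense that ν(u·w) = ρ(ψ(u))(ν(w)) for all u ∈ g, w ∈ h. Define ϱ : g × h → E by ϱ(u,w) := ψ(u) + D(ν(w)). Then: (i) ⟦ϱ(u₁,w₁), ϱ(u₂,w₂)⟧ = ϱ([u₁,u₂], u₁·w₂) for all u₁, u₂ ∈ g, w₁, w₂ ∈ h (i.e. ϱ intertwines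 the hemisemidirect product bracket ⟦(u₁,w₁),(u₂,w₂)⟧ = ([u₁,u₂], u₁·w₂) on g × h with the bracket on E); and (ii) ⟨ϱ(u,w), ϱ(u,w)⟩ = 2 ν(u·w) for all u ∈ g, w ∈ h. -/
/-- A Courant–Dorfman-type algebra with left-central exact part: a commutative
ℝ-algebra `R`, an `R`-module `E`, a symmetric `R`-bilinear pairing, an `R`-linear
anchor into the ℝ-linear derivations of `R`, an ℝ-linear map `D : R → E`, and an
ℝ-bilinear bracket, subject to the Courant–Dorfman axioms together with
left-centrality `⟦Df, e⟧ = 0`. -/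
structure CourantDorfman (R E : Type*) [CommRing R] [Algebra ℝ R]
    [AddCommGroup E] [Module R E] [Module ℝ E] [IsScalarTower ℝ R E] where
  pair : E → E → R
  anchor : E → R → R
  D : R → E
  bracket : E → E → E
  pair_symm : ∀ e₁ e₂, pair e₁ e₂ = pair e₂ e₁
  pair_add_left : ∀ e₁ e₂ e₃, pair (e₁ + e₂) e₃ = pair e₁ e₃ + pair e₂ e₃
  pair_smul_left : ∀ (f : R) (e₁ e₂ : E), pair (f • e₁) e₂ = f * pair e₁ e₂
  anchor_add_arg : ∀ (e : E) (f g : R), anchor e (f + g) = anchor e f + anchor e g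
  anchor_smul_arg : ∀ (e : E) (c : ℝ) (f : R), anchor e (c • f) = c • anchor e f
  anchor_deriv : ∀ (e : E) (f g : R), anchor e (f * g) = f * anchor e g + g * anchor e f
  anchor_add : ∀ (e₁ e₂ : E) (f : R), anchor (e₁ + e₂) f = anchor e₁ f + anchor e₂ f
  anchor_smul : ∀ (g : R) (e : E) (f : R), anchor (g • e) f = g * anchor e f
  D_add : ∀ f g : R, D (f + g) = D f + D g
  D_smul : ∀ (c : ℝ) (f : R), D (c • f) = c • D f
  bracket_add_left : ∀ e₁ e₂ e₃, bracket (e₁ + e₂) e₃ = bracket e₁ e₃ + bracket e₂ e₃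
  bracket_smul_left : ∀ (c : ℝ) (e₁ e₂ : E), bracket (c • e₁) e₂ = c • bracket e₁ e₂
  bracket_add_right : ∀ e₁ e₂ e₃, bracket e₁ (e₂ + e₃) = bracket e₁ e₂ + bracket e₁ e₃
  bracket_smul_right : ∀ (c : ℝ) (e₁ e₂ : E), bracket e₁ (c • e₂) = c • bracket e₁ e₂
  pair_D : ∀ (f : R) (e : E), pair (D f) e = anchor e f
  anchor_D : ∀ f g : R, anchor (D f) g = 0
  bracket_module_leibniz : ∀ (e₁ : E) (f : R) (e₂ : E),
      bracket e₁ (f • e₂) = f • bracket e₁ e₂ + (anchor e₁ f) • e₂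
  bracket_jacobi : ∀ e₁ e₂ e₃,
      bracket e₁ (bracket e₂ e₃) = bracket (bracket e₁ e₂) e₃ + bracket e₂ (bracket e₁ e₃)
  anchor_pair : ∀ e₁ e₂ e₃,
      anchor e₁ (pair e₂ e₃) = pair (bracket e₁ e₂) e₃ + pair e₂ (bracket e₁ e₃)
  bracket_symmetrization : ∀ e₁ e₂, bracket e₁ e₂ + bracket e₂ e₁ = D (pair e₁ e₂)
  bracket_D_left : ∀ (f : R) (e : E), bracket (D f) e = 0

theorem stmt14
    {R E G H : Type*} [CommRing R] [Algebra ℝ R]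
    [AddCommGroup E] [Module R E] [Module ℝ E] [IsScalarTower ℝ R E]
    [LieRing G] [LieAlgebra ℝ G] [AddCommGroup H] [Module ℝ H]
    (C : CourantDorfman R E)
    -- ψ : g → E is ℝ-linear, bracket preserving, with isotropic image
    (ψ : G →ₗ[ℝ] E)
    (hψbr : ∀ u v : G, C.bracket (ψ u) (ψ v) = ψ ⁅u, v⁆)
    (hψiso : ∀ u v : G, C.pair (ψ u) (ψ v) = 0)
    -- h is a g-module
    (act : G →ₗ[ℝ] H →ₗ[ℝ] H)
    (hact : ∀ (u v : G) (w : H), act ⁅u, v⁆ w = act u (act v w) - act v (act u w))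
    -- ν : h → R is ℝ-linear and g-equivariant
    (ν : H →ₗ[ℝ] R)
    (hν : ∀ (u : G) (w : H), ν (act u w) = C.anchor (ψ u) (ν w))
    -- ϱ(u,w) := ψ(u) + D(ν(w))
    (ϱ : G → H → E)
    (hϱ : ∀ (u : G) (w : H), ϱ u w = ψ u + C.D (ν w)) :
    -- (i) ϱ intertwines the hemisemidirect product bracket with the Courant bracket
    (∀ (u₁ u₂ : G) (w₁ w₂ : H),
        C.bracket (ϱ u₁ w₁) (ϱ u₂ w₂) = ϱ ⁅u₁, u₂⁆ (act u₁ w₂)) ∧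
    -- (ii) ⟨ϱ(u,w), ϱ(u,w)⟩ = 2 ν(u·w)
    (∀ (u : G) (w : H), C.pair (ϱ u w) (ϱ u w) = 2 * ν (act u w)) := by
  have hbrD : ∀ (e : E) (f : R), C.bracket e (C.D f) = C.D (C.anchor e f) := by
    intro e f
    have h := C.bracket_symmetrization e (C.D f)
    rw [C.bracket_D_left, add_zero] at h
    rw [h, C.pair_symm, C.pair_D]
  constructor
  · intro u₁ u₂ w₁ w₂
    rw [hϱ, hϱ, hϱ, C.bracket_add_left, C.bracket_D_left, add_zero,
      C.bracket_add_right, hψbr, hbrD, ← hν]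
  · intro u w
    rw [hϱ, C.pair_add_left, C.pair_symm (ψ u), C.pair_add_left,
      C.pair_symm (C.D (ν w)) (ψ u + C.D (ν w)), C.pair_add_left, C.pair_D, C.pair_D, C.pair_symm (ψ u) (C.D (ν w)),
      C.pair_D, hψiso, C.anchor_D, ← hν]
    ring
end
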